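/- Let f : ℝ → ℝ^6 be any differentiable solution of the so(4) free rigid body system. Then each of the four functions t ↦ C1(f(t)), t ↦ C2(f(t)), t ↦ H(f(t)) and t ↦ I(f(t)) is constant on ℝ; that is, C1, C2, H, and the Mishchenko integral I are constants of motion of the system. -/

import Mathlib

noncomputable section

/-- The right-hand side of the so(4) free rigid body system on ℝ⁶,
coordinates `(x1,x2,x3,y1,y2,y3) = (p 0, p 1, p 2, p 3, p 4, p 5)`. -/
def vf (l1 l2 l3 l4 : ℝ) (p : Fin 6 → ℝ) : Fin 6 → ℝ :=
  ![(1/(l1+l2) - 1/(l1+l3)) * (p 1 * p 2) + (1/(l3+l4) - 1/(l2+l4)) * (p 4 * p 5),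
    (1/(l2+l3) - 1/(l1+l2)) * (p 0 * p 2) + (1/(l1+l4) - 1/(l3+l4)) * (p 3 * p 5),
    (1/(l1+l3) - 1/(l2+l3)) * (p 0 * p 1) + (1/(l2+l4) - 1/(l1+l4)) * (p 3 * p 4),
    (1/(l3+l4) - 1/(l1+l3)) * (p 1 * p 5) + (1/(l1+l2) - 1/(l2+l4)) * (p 2 * p 4),
    (1/(l2+l3) - 1/(l3+l4)) * (p 0 * p 5) + (1/(l1+l4) - 1/(l1+l2)) * (p 2 * p 3),
    (1/(l2+l4) - 1/(l2+l3)) * (p 0 * p 4) + (1/(l1+l3) - 1/(l1+l4)) * (p 1 * p 3)]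

/-- Lyapunov stability of an equilibrium `e` of the so(4) free rigid body system:
for every ε > 0 there is δ > 0 such that every differentiable solution starting
δ-close to `e` stays ε-close to `e` for all t ≥ 0. -/
def IsLyapunovStable (l1 l2 l3 l4 : ℝ) (e : Fin 6 → ℝ) : Prop :=
  ∀ ε > 0, ∃ δ > 0, ∀ f : ℝ → (Fin 6 → ℝ),
    (∀ t : ℝ, HasDerivAt f (vf l1 l2 l3 l4 (f t)) t) →
    ‖f 0 - e‖ < δ → ∀ t ≥ 0, ‖f t - e‖ < ε

/-- Casimir `C1`. -/
def C1fun (p : Fin 6 → ℝ) : ℝ :=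
  (p 0 ^ 2 + p 1 ^ 2 + p 2 ^ 2 + p 3 ^ 2 + p 4 ^ 2 + p 5 ^ 2) / 2

/-- Casimir `C2`. -/
def C2fun (p : Fin 6 → ℝ) : ℝ := p 0 * p 3 + p 1 * p 4 + p 2 * p 5

/-- The Hamiltonian `H`. -/
def Hfun (l1 l2 l3 l4 : ℝ) (p : Fin 6 → ℝ) : ℝ :=
  (1/2) * (p 0 ^ 2 / (l2 + l3) + p 1 ^ 2 / (l1 + l3) + p 2 ^ 2 / (l1 + l2)
    + p 3 ^ 2 / (l1 + l4) + p 4 ^ 2 / (l2 + l4) + p 5 ^ 2 / (l3 + l4))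

/-- Mishchenko's integral `I`. -/
def Ifun (l1 l2 l3 l4 : ℝ) (p : Fin 6 → ℝ) : ℝ :=
  (l2^2 + l3^2) * p 0 ^ 2 + (l1^2 + l3^2) * p 1 ^ 2 + (l1^2 + l2^2) * p 2 ^ 2
    + (l1^2 + l4^2) * p 3 ^ 2 + (l2^2 + l4^2) * p 4 ^ 2 + (l3^2 + l4^2) * p 5 ^ 2

/-! Each of the four quantities is a quadratic form whose derivative along the vector field is a
cubic polynomial vanishing identically. For `C1`, `C2` and `H` this is a ring identity in the
reciprocals `1/(λi+λj)`; for `I` the coefficient of each cubic monomial becomes a telescoping sum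
once `(λj² - λi²)/(λi+λj)` is replaced by `λj - λi`. -/

open ContinuousLinearMap

def IsFirstIntegral {E : Type*} [NormedAddCommGroup E] [NormedSpace ℝ E]
    (V : E → E) (g : E → ℝ) : Prop :=
  ∀ f : ℝ → E, (∀ t, HasDerivAt f (V (f t)) t) → ∀ s t, g (f s) = g (f t)

theorem isFirstIntegral_of_hasFDerivAt {E : Type*} [NormedAddCommGroup E] [NormedSpace ℝ E]
    {V : E → E} {g : E → ℝ} {g' : E → E →L[ℝ] ℝ}
    (hg : ∀ p, HasFDerivAt g (g' p) p) (hV : ∀ p, g' p (V p) = 0) :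
    IsFirstIntegral V g := by
  intro f hf s t
  have hgf : ∀ t, HasDerivAt (g ∘ f) 0 t := fun t => by
    simpa [hV] using (hg (f t)).comp_hasDerivAt t (hf t)
  exact is_const_of_deriv_eq_zero (fun t => (hgf t).differentiableAt)
    (fun t => (hgf t).deriv) s t

section DiagQuadForm

variable {ι : Type*} [Fintype ι]

def diagQuadForm (w p : ι → ℝ) : ℝ := ∑ i, w i * p i ^ 2

theorem hasFDerivAt_diagQuadForm (w p : ι → ℝ) :
    HasFDerivAt (diagQuadForm w)
      (∑ i, (2 * w i * p i) • proj (R := ℝ) (φ := fun _ : ι => ℝ) i) p := by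
  refine (HasFDerivAt.fun_sum (u := Finset.univ) (A := fun i (q : ι → ℝ) => w i * q i ^ 2)
    fun i _ => (((hasFDerivAt_apply (𝕜 := ℝ) i p).pow 2).const_mul (w i) :)).congr_fderiv ?_
  ext v
  simp only [Nat.add_one_sub_one, pow_one, nsmul_eq_mul, Nat.cast_ofNat, sum_apply, smul_apply,
    proj_apply, smul_eq_mul]
  exact Finset.sum_congr rfl fun i _ => by ring

theorem isFirstIntegral_diagQuadForm {w : ι → ℝ} {V : (ι → ℝ) → ι → ℝ}
    (hV : ∀ p, ∑ i, w i * p i * V p i = 0) : IsFirstIntegral V (diagQuadForm w) := by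
  refine isFirstIntegral_of_hasFDerivAt (hasFDerivAt_diagQuadForm w) fun p => ?_
  simpa [mul_assoc, ← Finset.mul_sum] using hV p

end DiagQuadForm

section So4

variable (l1 l2 l3 l4 : ℝ)

theorem C1fun_eq_diagQuadForm : C1fun = diagQuadForm fun _ => 1 / 2 := by
  ext p
  simp only [C1fun, diagQuadForm, Fin.sum_univ_six]
  ring

theorem Hfun_eq_diagQuadForm :
    Hfun l1 l2 l3 l4 = diagQuadForm ![(l2 + l3)⁻¹ / 2, (l1 + l3)⁻¹ / 2, (l1 + l2)⁻¹ / 2,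
      (l1 + l4)⁻¹ / 2, (l2 + l4)⁻¹ / 2, (l3 + l4)⁻¹ / 2] := by
  ext p
  simp only [Hfun, diagQuadForm, Fin.sum_univ_six, Matrix.cons_val_zero, Matrix.cons_val_one,
    Matrix.cons_val]
  ring

theorem Ifun_eq_diagQuadForm :
    Ifun l1 l2 l3 l4 = diagQuadForm ![l2 ^ 2 + l3 ^ 2, l1 ^ 2 + l3 ^ 2, l1 ^ 2 + l2 ^ 2,
      l1 ^ 2 + l4 ^ 2, l2 ^ 2 + l4 ^ 2, l3 ^ 2 + l4 ^ 2] := by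
  ext p
  simp only [Ifun, diagQuadForm, Fin.sum_univ_six, Matrix.cons_val_zero, Matrix.cons_val_one,
    Matrix.cons_val]

theorem isFirstIntegral_C1fun : IsFirstIntegral (vf l1 l2 l3 l4) C1fun := by
  rw [C1fun_eq_diagQuadForm]
  refine isFirstIntegral_diagQuadForm fun p => ?_
  simp only [vf, Fin.sum_univ_six, Matrix.cons_val_zero, Matrix.cons_val_one, Matrix.cons_val]
  ring

theorem isFirstIntegral_C2fun : IsFirstIntegral (vf l1 l2 l3 l4) C2fun := by
  have coord (i : Fin 6) (p : Fin 6 → ℝ) := hasFDerivAt_apply (𝕜 := ℝ) i p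
  refine isFirstIntegral_of_hasFDerivAt (fun p => (((coord 0 p).mul (coord 3 p)).add
    ((coord 1 p).mul (coord 4 p))).add ((coord 2 p).mul (coord 5 p))) fun p => ?_
  simp only [vf, add_apply, smul_apply, proj_apply, smul_eq_mul, Matrix.cons_val_zero,
    Matrix.cons_val_one, Matrix.cons_val]
  ring

theorem isFirstIntegral_Hfun : IsFirstIntegral (vf l1 l2 l3 l4) (Hfun l1 l2 l3 l4) := by
  rw [Hfun_eq_diagQuadForm]
  refine isFirstIntegral_diagQuadForm fun p => ?_
  simp only [vf, Fin.sum_univ_six, Matrix.cons_val_zero, Matrix.cons_val_one, Matrix.cons_val]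
  ring

theorem isFirstIntegral_Ifun (h12 : l1 + l2 ≠ 0) (h13 : l1 + l3 ≠ 0) (h14 : l1 + l4 ≠ 0)
    (h23 : l2 + l3 ≠ 0) (h24 : l2 + l4 ≠ 0) (h34 : l3 + l4 ≠ 0) :
    IsFirstIntegral (vf l1 l2 l3 l4) (Ifun l1 l2 l3 l4) := by
  rw [Ifun_eq_diagQuadForm]
  refine isFirstIntegral_diagQuadForm fun p => ?_
  simp only [vf, Fin.sum_univ_six, Matrix.cons_val_zero, Matrix.cons_val_one, Matrix.cons_val]
  field_simp
  ring

end So4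

theorem constants_of_motion
    (l1 l2 l3 l4 : ℝ)
    (s12 : 0 < l1 + l2) (s13 : 0 < l1 + l3) (s14 : 0 < l1 + l4)
    (s23 : 0 < l2 + l3) (s24 : 0 < l2 + l4) (s34 : 0 < l3 + l4)
    (f : ℝ → (Fin 6 → ℝ))
    (hf : ∀ t : ℝ, HasDerivAt f (vf l1 l2 l3 l4 (f t)) t) :
    (∀ s t : ℝ, C1fun (f s) = C1fun (f t)) ∧
    (∀ s t : ℝ, C2fun (f s) = C2fun (f t)) ∧
    (∀ s t : ℝ, Hfun l1 l2 l3 l4 (f s) = Hfun l1 l2 l3 l4 (f t)) ∧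
    (∀ s t : ℝ, Ifun l1 l2 l3 l4 (f s) = Ifun l1 l2 l3 l4 (f t)) :=
  ⟨isFirstIntegral_C1fun l1 l2 l3 l4 f hf, isFirstIntegral_C2fun l1 l2 l3 l4 f hf,
    isFirstIntegral_Hfun l1 l2 l3 l4 f hf,
    isFirstIntegral_Ifun l1 l2 l3 l4 s12.ne' s13.ne' s14.ne' s23.ne' s24.ne' s34.ne' f hf⟩
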